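/- Let ν > −1 and let k ≥ 1 be an integer. Then for every smooth function f : (0,∞) → ℝ and every x > 0, δ_ν^k f(x) = δ_{ν+1}^k f(x) + (k/x) · δ_{ν+1}^{k−1} f(x). -/

import Mathlib

open Real Set

/-- The operator `δ_ν f(x) = f'(x) + x f(x) − (ν+1/2) f(x)/x`. -/
noncomputable def laguerreDelta (ν : ℝ) (f : ℝ → ℝ) : ℝ → ℝ :=
  fun x => deriv f x + x * f x - (ν + 1 / 2) * f x / x

lemma laguerreDelta_contDiffOn (μ : ℝ) (f : ℝ → ℝ)
    (hf : ContDiffOn ℝ (⊤ : ℕ∞) f (Set.Ioi 0)) :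
    ContDiffOn ℝ (⊤ : ℕ∞) (laguerreDelta μ f) (Set.Ioi 0) := by
  unfold laguerreDelta
  have hd : ContDiffOn ℝ (⊤ : ℕ∞) (deriv f) (Set.Ioi 0) :=
    hf.deriv_of_isOpen isOpen_Ioi (by simp)
  exact (hd.add (contDiffOn_id.mul hf)).sub
    ((contDiffOn_const.mul hf).div contDiffOn_id (fun x hx => ne_of_gt hx))

lemma laguerreDelta_iter_contDiffOn (μ : ℝ) (f : ℝ → ℝ)
    (hf : ContDiffOn ℝ (⊤ : ℕ∞) f (Set.Ioi 0)) (k : ℕ) :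
    ContDiffOn ℝ (⊤ : ℕ∞) ((laguerreDelta μ)^[k] f) (Set.Ioi 0) := by
  induction k with
  | zero => simpa using hf
  | succ k ih =>
    rw [Function.iterate_succ_apply']
    exact laguerreDelta_contDiffOn μ _ ih

lemma laguerreDelta_diffAt {g : ℝ → ℝ} (hg : ContDiffOn ℝ (⊤ : ℕ∞) g (Set.Ioi 0))
    {x : ℝ} (hx : 0 < x) : DifferentiableAt ℝ g x :=
  (hg.differentiableOn (by simp)).differentiableAt (isOpen_Ioi.mem_nhds hx)

/-- for `ν > −1`, `k ≥ 1` and every smooth `f` on `(0,∞)`,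
`δ_ν^k f(x) = δ_{ν+1}^k f(x) + (k/x) δ_{ν+1}^{k−1} f(x)` for every `x > 0`. -/
theorem statement5 (ν : ℝ) (hν : -1 < ν) (k : ℕ) (hk : 1 ≤ k) (f : ℝ → ℝ)
    (hf : ContDiffOn ℝ (⊤ : ℕ∞) f (Set.Ioi 0)) (x : ℝ) (hx : 0 < x) :
    (laguerreDelta ν)^[k] f x =
      (laguerreDelta (ν + 1))^[k] f x + (k : ℝ) / x * (laguerreDelta (ν + 1))^[k - 1] f x := by
  induction k, hk using Nat.le_induction generalizing x with
  | base =>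
    simp only [Function.iterate_one, Nat.sub_self, Function.iterate_zero, id_eq,
      Nat.cast_one, laguerreDelta]
    field_simp
    ring
  | succ k hk IH =>
    set A := (laguerreDelta (ν + 1))^[k] f with hAdef
    set B := (laguerreDelta (ν + 1))^[k - 1] f with hBdef
    have hA : A = laguerreDelta (ν + 1) B := by
      conv_lhs => rw [hAdef, show k = (k - 1) + 1 from (Nat.succ_pred_eq_of_pos hk).symm,
        Function.iterate_succ_apply']
    have hAc : ContDiffOn ℝ (⊤ : ℕ∞) A (Set.Ioi 0) := laguerreDelta_iter_contDiffOn _ f hf k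
    have hBc : ContDiffOn ℝ (⊤ : ℕ∞) B (Set.Ioi 0) := laguerreDelta_iter_contDiffOn _ f hf (k - 1)
    have hAd : HasDerivAt A (deriv A x) x :=
      (laguerreDelta_diffAt hAc hx).hasDerivAt
    have hBd : HasDerivAt B (deriv B x) x :=
      (laguerreDelta_diffAt hBc hx).hasDerivAt
    have heq : (laguerreDelta ν)^[k] f =ᶠ[nhds x] fun y => A y + (k : ℝ) / y * B y := by
      filter_upwards [isOpen_Ioi.mem_nhds hx] with y hy
      exact IH y hy
    have h1 : HasDerivAt (fun y => (k : ℝ) / y * B y)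
        (((k : ℝ) * -(x ^ 2)⁻¹) * B x + (k : ℝ) / x * deriv B x) x := by
      have : HasDerivAt (fun y => (k : ℝ) * y⁻¹ * B y) _ x :=
        ((hasDerivAt_inv hx.ne').const_mul (k : ℝ)).mul hBd
      simpa [div_eq_mul_inv] using this
    have hsum : HasDerivAt (fun y => A y + (k : ℝ) / y * B y)
        (deriv A x + (((k : ℝ) * -(x ^ 2)⁻¹) * B x + (k : ℝ) / x * deriv B x)) x :=
      hAd.add h1
    have hderiv : deriv ((laguerreDelta ν)^[k] f) x =
        deriv A x + (((k : ℝ) * -(x ^ 2)⁻¹) * B x + (k : ℝ) / x * deriv B x) := by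
      rw [heq.deriv_eq, hsum.deriv]
    have hval : (laguerreDelta ν)^[k] f x = A x + (k : ℝ) / x * B x := IH x hx
    have hAx : A x = deriv B x + x * B x - (ν + 1 + 1 / 2) * B x / x := by
      rw [hA]; rfl
    rw [Function.iterate_succ_apply', Function.iterate_succ_apply',
      show k + 1 - 1 = k from rfl, ← hAdef]
    have expand : ∀ (μ : ℝ) (g : ℝ → ℝ),
        laguerreDelta μ g x = deriv g x + x * g x - (μ + 1 / 2) * g x / x := fun _ _ => rfl
    rw [expand, expand, hderiv, hval, hAx]
    have hx' : x ≠ 0 := hx.ne'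
    push_cast
    field_simp
    ring
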